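/- arXiv:1806.01060 — 3 statements merged into one kernel-verified Lean document; each statement's English description precedes it below -/
import Mathlib

section
/- For fixed a ≥ 0 and all real b with |b| ≥ 1, the modulus of the Gamma function satisfies |Γ(a+bi)| ≍ |b|^{a-1/2} exp(-π|b|/2), i.e., there exist constants c, C > 0 (depending only on a) such that c·|b|^{a-1/2}·exp(-π|b|/2) ≤ |Γ(a+bi)| ≤ C·|b|^{a-1/2}·exp(-π|b|/2) for all |b| ≥ 1. -/
/-!
On the line `re s = 1/2` the reflection formula gives `‖Γ s‖² = π / cosh (π im s)`, which is the
claimed size. Stirling's formula `Γ w ≈ √(2π) w ^ (w - 1/2) e ^ (-w)` suggests that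
`Γ w * w ^ (1/2 - w)` is bounded on vertical strips: on `1/2 ≤ re w ≤ 3/2` this follows by
Phragmén–Lindelöf from the two edges (the right one reduced to the left by `Γ (w + 1) = w Γ w`),
since `‖Γ w‖ ≤ Γ (re w)` gives the required a priori growth bound. The recursion then moves the
upper bound to every real part, and `Γ s Γ (1 - s) = π / sin (π s)` turns the upper bound at
`1 - a` into the lower bound at `a`.
-/

open Complex Real

open Set Filter Asymptotics

lemma Real.arctan_le_self {t : ℝ} (ht : 0 ≤ t) : arctan t ≤ t := by
  simpa only [tan_arctan] using le_tan (arctan_nonneg.2 ht) (arctan_lt_pi_div_two t)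

lemma Real.pi_div_two_mul_abs_sub_le_mul_arctan_div {x : ℝ} (hx : 0 < x) (y : ℝ) :
    π / 2 * |y| - x ≤ y * arctan (y / x) := by
  wlog hy : 0 < y generalizing y
  · rcases (not_lt.1 hy).lt_or_eq with hy | rfl
    · simpa only [abs_neg, neg_div, arctan_neg, neg_mul_neg] using this (-y) (neg_pos.2 hy)
    · simp [hx.le]
  have hxy := div_pos hx hy
  have h := arctan_inv_of_pos hxy
  rw [inv_div] at h
  rw [h, abs_of_pos hy]
  calc π / 2 * y - x = y * (π / 2 - x / y) := by field_simp
    _ ≤ y * (π / 2 - arctan (x / y)) := by gcongr; exact arctan_le_self hxy.le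

namespace Complex

lemma arg_eq_arctan_of_re_pos {z : ℂ} (hz : 0 < z.re) : arg z = Real.arctan (z.im / z.re) := by
  have h := abs_lt.1 (abs_arg_lt_pi_div_two_iff.2 (Or.inl hz))
  rw [← tan_arg, Real.arctan_tan h.1 h.2]

lemma pi_div_two_mul_abs_im_sub_re_le_im_mul_arg {z : ℂ} (hz : 0 < z.re) :
    π / 2 * |z.im| - z.re ≤ z.im * arg z := by
  rw [arg_eq_arctan_of_re_pos hz]
  exact Real.pi_div_two_mul_abs_sub_le_mul_arctan_div hz z.im

lemma im_mul_arg_le {z : ℂ} (hz : 0 ≤ z.re) : z.im * arg z ≤ π / 2 * |z.im| :=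
  calc z.im * arg z ≤ |z.im| * |arg z| := abs_mul z.im (arg z) ▸ le_abs_self _
    _ ≤ |z.im| * (π / 2) := by gcongr; exact abs_arg_le_pi_div_two_iff.2 hz
    _ = π / 2 * |z.im| := mul_comm _ _

lemma norm_sin_le_exp_abs_im (z : ℂ) : ‖sin z‖ ≤ Real.exp |z.im| := by
  have hexp : ∀ w : ℂ, ‖exp (w * I)‖ = Real.exp (-w.im) := fun w => by simp [norm_exp]
  calc ‖sin z‖ = ‖exp (-z * I) - exp (z * I)‖ / 2 := by simp [sin]
    _ ≤ (‖exp (-z * I)‖ + ‖exp (z * I)‖) / 2 := by gcongr; exact norm_sub_le _ _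
    _ = (Real.exp z.im + Real.exp (-z.im)) / 2 := by rw [hexp, hexp, neg_im, neg_neg]
    _ ≤ Real.exp |z.im| := by
      linarith [exp_le_exp.2 (le_abs_self z.im), exp_le_exp.2 (neg_le_abs z.im)]

lemma norm_Gamma_le_Gamma_re {s : ℂ} (hs : 0 < s.re) : ‖Gamma s‖ ≤ Real.Gamma s.re := by
  rw [Gamma_eq_integral hs, Real.Gamma_eq_integral hs, GammaIntegral]
  refine (MeasureTheory.norm_integral_le_integral_norm _).trans_eq ?_
  refine MeasureTheory.setIntegral_congr_fun measurableSet_Ioi fun x (hx : 0 < x) => ?_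
  rw [norm_mul, norm_real, Real.norm_of_nonneg (exp_pos _).le, norm_cpow_eq_rpow_re_of_pos hx]
  simp

lemma norm_Gamma_le_max_of_re_mem_Icc {a b : ℝ} (ha : 0 < a) {s : ℂ} (hs : s.re ∈ Icc a b) :
    ‖Gamma s‖ ≤ max (Real.Gamma a) (Real.Gamma b) :=
  (norm_Gamma_le_Gamma_re (ha.trans_le hs.1)).trans <|
    Real.convexOn_Gamma.le_max_of_mem_Icc ha (ha.trans_le (hs.1.trans hs.2)) hs

lemma norm_Gamma_mul_norm_Gamma_one_sub (z : ℂ) :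
    ‖Gamma z‖ * ‖Gamma (1 - z)‖ = π / ‖sin (π * z)‖ := by
  rw [← norm_mul, Gamma_mul_Gamma_one_sub, norm_div, norm_real, Real.norm_of_nonneg pi_pos.le]

lemma norm_Gamma_sq_of_re_eq_half {s : ℂ} (hs : s.re = 1 / 2) :
    ‖Gamma s‖ ^ 2 = π / Real.cosh (π * s.im) := by
  have hconj : 1 - s = (starRingEnd ℂ) s := by apply Complex.ext <;> norm_num [hs]
  have hsin : sin (π * s) = Real.cosh (π * s.im) := by
    conv_lhs => rw [← re_add_im s, hs]
    rw [show (π : ℂ) * ((1 / 2 : ℝ) + s.im * I) = (π * s.im : ℝ) * I + π / 2 by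
      push_cast; ring, sin_add_pi_div_two, cos_mul_I, ofReal_cosh]
  rw [sq]
  nth_rewrite 2 [← norm_conj (Gamma s)]
  rw [← Gamma_conj, ← hconj, norm_Gamma_mul_norm_Gamma_one_sub, hsin, norm_real,
    Real.norm_of_nonneg (cosh_pos _).le]

lemma norm_Gamma_mul_exp_le_of_re_eq_half {s : ℂ} (hs : s.re = 1 / 2) :
    ‖Gamma s‖ * Real.exp (π / 2 * |s.im|) ≤ √(2 * π) := by
  have hcosh : Real.exp (π * |s.im|) ≤ 2 * Real.cosh (π * s.im) := by
    rw [← cosh_abs, abs_mul, abs_of_pos pi_pos, cosh_eq]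
    linarith [Real.exp_pos (-(π * |s.im|))]
  rw [← pow_le_pow_iff_left₀ (by positivity) (by positivity) two_ne_zero, mul_pow,
    norm_Gamma_sq_of_re_eq_half hs, sq_sqrt (by positivity), ← Real.exp_nat_mul,
    div_mul_eq_mul_div, div_le_iff₀ (cosh_pos _)]
  calc π * Real.exp (((2 : ℕ) : ℝ) * (π / 2 * |s.im|)) = π * Real.exp (π * |s.im|) := by
        push_cast; ring_nf
    _ ≤ 2 * π * Real.cosh (π * s.im) := by nlinarith [pi_pos]

end Complex

noncomputable def gammaNormalized (w : ℂ) : ℂ := Gamma w * w ^ (1 / 2 - w)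

lemma differentiableAt_gammaNormalized {w : ℂ} (hw : 0 < w.re) :
    DifferentiableAt ℂ gammaNormalized w := by
  refine (differentiableAt_Gamma w fun m hm => ?_).mul
    (differentiableAt_id.cpow (differentiableAt_const _ |>.sub differentiableAt_id) (Or.inl hw))
  have : w.re = -m := by simp [hm]
  linarith [m.cast_nonneg (α := ℝ)]

lemma norm_gammaNormalized {w : ℂ} (hw : w ≠ 0) :
    ‖gammaNormalized w‖ = ‖Gamma w‖ * ‖w‖ ^ (1 / 2 - w.re) * Real.exp (w.im * arg w) := by
  rw [gammaNormalized, norm_mul, norm_cpow_of_ne_zero hw, div_eq_mul_inv, ← Real.exp_neg, mul_assoc]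
  simp [mul_comm]

lemma norm_gammaNormalized_le_of_re_eq_half {w : ℂ} (hw : w.re = 1 / 2) :
    ‖gammaNormalized w‖ ≤ √(2 * π) := by
  rw [norm_gammaNormalized (by rintro rfl; norm_num at hw), hw, sub_self, Real.rpow_zero, mul_one]
  refine le_trans ?_ (norm_Gamma_mul_exp_le_of_re_eq_half hw)
  gcongr ‖Gamma w‖ * Real.exp ?_
  exact im_mul_arg_le (by rw [hw]; norm_num)

lemma norm_gammaNormalized_le_of_re_eq_three_halves {w : ℂ} (hw : w.re = 3 / 2) :
    ‖gammaNormalized w‖ ≤ √(2 * π) := by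
  have hu : (w - 1).re = 1 / 2 := by rw [sub_re, hw]; norm_num
  have hw0 : 0 < ‖w‖ := norm_pos_iff.2 (by rintro rfl; norm_num at hw)
  have hGamma : Gamma w = (w - 1) * Gamma (w - 1) := by
    rw [← Gamma_add_one _ (by rintro h; norm_num [h] at hu), sub_add_cancel]
  have hle : ‖w - 1‖ ≤ ‖w‖ := by
    rw [← sq_le_sq₀ (norm_nonneg _) (norm_nonneg _), Complex.sq_norm, Complex.sq_norm, normSq_apply,
      normSq_apply, sub_re, sub_im, hw]
    norm_num
  rw [norm_gammaNormalized (norm_ne_zero_iff.1 hw0.ne'), hGamma, norm_mul, hw,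
    show (1 / 2 - 3 / 2 : ℝ) = -1 by norm_num, Real.rpow_neg_one]
  calc ‖w - 1‖ * ‖Gamma (w - 1)‖ * ‖w‖⁻¹ * Real.exp (w.im * arg w)
      = ‖w - 1‖ / ‖w‖ * (‖Gamma (w - 1)‖ * Real.exp (w.im * arg w)) := by ring
    _ ≤ 1 * (‖Gamma (w - 1)‖ * Real.exp (π / 2 * |(w - 1).im|)) := by
        gcongr ?_ * (_ * Real.exp ?_)
        · exact div_le_one_of_le₀ hle hw0.le
        · simpa using im_mul_arg_le (by rw [hw]; norm_num)
    _ ≤ √(2 * π) := by rw [one_mul]; exact norm_Gamma_mul_exp_le_of_re_eq_half hu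

lemma norm_gammaNormalized_le_exp_exp {w : ℂ} (hw : w.re ∈ Icc (1 / 2 : ℝ) (3 / 2)) :
    ‖gammaNormalized w‖ ≤
      2 * max (Real.Gamma (1 / 2)) (Real.Gamma (3 / 2)) * Real.exp (π / 2 * Real.exp |w.im|) := by
  have hnorm : (1 / 2 : ℝ) ≤ ‖w‖ := hw.1.trans (re_le_norm w)
  have hpow : ‖w‖ ^ (1 / 2 - w.re) ≤ 2 :=
    calc ‖w‖ ^ (1 / 2 - w.re) ≤ (1 / 2 : ℝ) ^ (1 / 2 - w.re) :=
          Real.rpow_le_rpow_of_nonpos (by norm_num) hnorm (by linarith [hw.1])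
      _ ≤ (1 / 2 : ℝ) ^ (-1 : ℝ) :=
          Real.rpow_le_rpow_of_exponent_ge (by norm_num) (by norm_num) (by linarith [hw.2])
      _ = 2 := by norm_num
  have harg : w.im * arg w ≤ π / 2 * Real.exp |w.im| :=
    (im_mul_arg_le (by linarith [hw.1])).trans <| by
      gcongr; linarith [Real.add_one_le_exp |w.im|]
  rw [norm_gammaNormalized (norm_pos_iff.1 (by linarith))]
  calc ‖Gamma w‖ * ‖w‖ ^ (1 / 2 - w.re) * Real.exp (w.im * arg w)
      ≤ max (Real.Gamma (1 / 2)) (Real.Gamma (3 / 2)) * 2 * Real.exp (π / 2 * Real.exp |w.im|) := by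
        gcongr
        exact norm_Gamma_le_max_of_re_mem_Icc (by norm_num) hw
    _ = _ := by ring

lemma norm_gammaNormalized_le {w : ℂ} (hw : w.re ∈ Icc (1 / 2 : ℝ) (3 / 2)) :
    ‖gammaNormalized w‖ ≤ √(2 * π) := by
  refine PhragmenLindelof.vertical_strip (DifferentiableOn.diffContOnCl fun z hz => ?_) ?_
    (fun _ => norm_gammaNormalized_le_of_re_eq_half)
    (fun _ => norm_gammaNormalized_le_of_re_eq_three_halves) hw.1 hw.2
  · rw [closure_preimage_re, closure_Ioo (by norm_num)] at hz
    exact (differentiableAt_gammaNormalized (by linarith [hz.1])).differentiableWithinAt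
  · refine ⟨1, by norm_num; linarith [pi_gt_three], π / 2, IsBigO.of_bound
      (2 * max (Real.Gamma (1 / 2)) (Real.Gamma (3 / 2))) ?_⟩
    refine eventually_inf_principal.2 (Eventually.of_forall fun z hz => ?_)
    rw [one_mul, Real.norm_of_nonneg (Real.exp_pos _).le]
    exact norm_gammaNormalized_le_exp_exp (Ioo_subset_Icc_self hz)

def HasGammaUpperBound (a : ℝ) : Prop :=
  ∃ C > 0, ∀ b : ℝ, 1 ≤ |b| →
    ‖Gamma (a + b * I)‖ ≤ C * |b| ^ (a - 1 / 2) * Real.exp (-(π * |b|) / 2)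

def HasGammaLowerBound (a : ℝ) : Prop :=
  ∃ c > 0, ∀ b : ℝ, 1 ≤ |b| →
    c * |b| ^ (a - 1 / 2) * Real.exp (-(π * |b|) / 2) ≤ ‖Gamma (a + b * I)‖

lemma abs_le_norm_add_mul_I (a b : ℝ) : |b| ≤ ‖(a + b * I : ℂ)‖ := by
  simpa using abs_im_le_norm (a + b * I)

lemma norm_add_mul_I_le (a : ℝ) {b : ℝ} (hb : 1 ≤ |b|) : ‖(a + b * I : ℂ)‖ ≤ (|a| + 1) * |b| :=
  calc ‖(a + b * I : ℂ)‖ ≤ |a| + |b| := by simpa using norm_le_abs_re_add_abs_im (a + b * I)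
    _ ≤ (|a| + 1) * |b| := by nlinarith [abs_nonneg a]

lemma hasGammaUpperBound_of_mem_Icc {x : ℝ} (hx : x ∈ Icc (1 / 2 : ℝ) (3 / 2)) :
    HasGammaUpperBound x := by
  refine ⟨5 / 2 * √(2 * π) * Real.exp (3 / 2), by positivity, fun y hy => ?_⟩
  set w : ℂ := x + y * I with hw
  have hre : w.re = x := by simp [hw]
  have him : w.im = y := by simp [hw]
  have hw0 : 0 < ‖w‖ := (by linarith : (0 : ℝ) < |y|).trans_le (abs_le_norm_add_mul_I x y)
  have hF := norm_gammaNormalized_le (hre ▸ hx)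
  rw [norm_gammaNormalized (norm_pos_iff.1 hw0), hre, mul_assoc] at hF
  have hGamma : ‖Gamma w‖ ≤ √(2 * π) * ‖w‖ ^ (x - 1 / 2) * Real.exp (-(w.im * arg w)) := by
    calc ‖Gamma w‖ ≤ √(2 * π) / (‖w‖ ^ (1 / 2 - x) * Real.exp (w.im * arg w)) :=
          (le_div_iff₀ (by positivity)).2 hF
      _ = _ := by
          rw [div_eq_mul_inv, mul_inv, ← Real.rpow_neg hw0.le, ← Real.exp_neg, neg_sub, mul_assoc]
  have hpow : ‖w‖ ^ (x - 1 / 2) ≤ 5 / 2 * |y| ^ (x - 1 / 2) :=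
    calc ‖w‖ ^ (x - 1 / 2) ≤ ((|x| + 1) * |y|) ^ (x - 1 / 2) :=
          Real.rpow_le_rpow hw0.le (norm_add_mul_I_le x hy) (by linarith [hx.1])
      _ = (|x| + 1) ^ (x - 1 / 2) * |y| ^ (x - 1 / 2) :=
          Real.mul_rpow (by positivity) (abs_nonneg _)
      _ ≤ (|x| + 1) * |y| ^ (x - 1 / 2) := by
          gcongr
          exact Real.rpow_le_self_of_one_le (by linarith [abs_nonneg x]) (by linarith [hx.2])
      _ ≤ 5 / 2 * |y| ^ (x - 1 / 2) := by
          gcongr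
          rw [abs_of_nonneg (by linarith [hx.1])]
          linarith [hx.2]
  have hexp : Real.exp (-(w.im * arg w)) ≤ Real.exp (3 / 2) * Real.exp (-(π * |y|) / 2) := by
    have := pi_div_two_mul_abs_im_sub_re_le_im_mul_arg (by linarith [hx.1] : 0 < w.re)
    rw [hre, him] at this
    rw [← Real.exp_add, him]
    gcongr
    linarith [hx.2]
  calc ‖Gamma w‖ ≤ √(2 * π) * ‖w‖ ^ (x - 1 / 2) * Real.exp (-(w.im * arg w)) := hGamma
    _ ≤ √(2 * π) * (5 / 2 * |y| ^ (x - 1 / 2)) *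
          (Real.exp (3 / 2) * Real.exp (-(π * |y|) / 2)) := by
        gcongr
    _ = _ := by ring

lemma hasGammaUpperBound_add_one_iff (a : ℝ) :
    HasGammaUpperBound (a + 1) ↔ HasGammaUpperBound a := by
  have hrec : ∀ b : ℝ, 1 ≤ |b| →
      Gamma ((a + 1 : ℝ) + b * I) = (a + b * I) * Gamma (a + b * I) := fun b hb => by
    have hz : (a + b * I : ℂ) ≠ 0 :=
      norm_pos_iff.1 ((by linarith : (0 : ℝ) < |b|).trans_le (abs_le_norm_add_mul_I a b))
    rw [← Gamma_add_one _ hz]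
    push_cast
    ring_nf
  have hpow : ∀ b : ℝ, 1 ≤ |b| → |b| ^ (a + 1 - 1 / 2) = |b| ^ (a - 1 / 2) * |b| := fun b hb => by
    rw [show a + 1 - 1 / 2 = (a - 1 / 2) + 1 by ring, Real.rpow_add_one (by positivity)]
  constructor
  · rintro ⟨C, hC, h⟩
    refine ⟨C, hC, fun b hb => le_of_mul_le_mul_left ?_ (by positivity : (0 : ℝ) < |b|)⟩
    have hbound := h b hb
    rw [hrec b hb, norm_mul, hpow b hb] at hbound
    calc |b| * ‖Gamma (a + b * I)‖ ≤ ‖(a + b * I : ℂ)‖ * ‖Gamma (a + b * I)‖ := by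
          gcongr
          exact abs_le_norm_add_mul_I a b
      _ ≤ _ := hbound
      _ = _ := by ring
  · rintro ⟨C, hC, h⟩
    refine ⟨(|a| + 1) * C, by positivity, fun b hb => ?_⟩
    rw [hrec b hb, norm_mul, hpow b hb]
    calc ‖(a + b * I : ℂ)‖ * ‖Gamma (a + b * I)‖
        ≤ ((|a| + 1) * |b|) * (C * |b| ^ (a - 1 / 2) * Real.exp (-(π * |b|) / 2)) := by
          gcongr
          · exact norm_add_mul_I_le a hb
          · exact h b hb
      _ = _ := by ring

lemma hasGammaUpperBound (a : ℝ) : HasGammaUpperBound a := by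
  have hper : Function.Periodic HasGammaUpperBound 1 :=
    fun a => propext (hasGammaUpperBound_add_one_iff a)
  rw [← hper.sub_int_mul_eq ⌊a - 1 / 2⌋, mul_one]
  apply hasGammaUpperBound_of_mem_Icc
  constructor <;> linarith [Int.floor_le (a - 1 / 2), Int.lt_floor_add_one (a - 1 / 2)]

lemma hasGammaLowerBound_of_one_sub {a : ℝ} (h : HasGammaUpperBound (1 - a)) :
    HasGammaLowerBound a := by
  obtain ⟨C, hC, h⟩ := h
  refine ⟨π / C, by positivity, fun b hb => ?_⟩
  set z : ℂ := a + b * I with hz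
  have hb0 : 0 < |b| := by linarith
  have hGamma : ‖Gamma (1 - z)‖ ≤ C * |b| ^ (1 - a - 1 / 2) * Real.exp (-(π * |b|) / 2) := by
    have := h (-b) (by rwa [abs_neg])
    rw [abs_neg] at this
    convert this using 3
    push_cast
    ring
  have hsin : ‖sin (π * z)‖ ≤ Real.exp (π * |b|) := by
    simpa [hz, abs_mul, abs_of_pos pi_pos] using norm_sin_le_exp_abs_im (π * z)
  have hsin0 : 0 < ‖sin (π * z)‖ := by
    refine norm_pos_iff.2 fun h0 => ?_
    obtain ⟨k, hk⟩ := sin_eq_zero_iff.1 h0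
    have := congrArg im hk
    simp [hz, pi_ne_zero] at this
    simp [this] at hb0
  have hreflect : π * Real.exp (-(π * |b|)) ≤
      ‖Gamma z‖ * (C * |b| ^ (1 - a - 1 / 2) * Real.exp (-(π * |b|) / 2)) :=
    calc π * Real.exp (-(π * |b|)) = π / Real.exp (π * |b|) := by rw [Real.exp_neg, div_eq_mul_inv]
      _ ≤ π / ‖sin (π * z)‖ := div_le_div_of_nonneg_left pi_pos.le hsin0 hsin
      _ = ‖Gamma z‖ * ‖Gamma (1 - z)‖ := (norm_Gamma_mul_norm_Gamma_one_sub z).symm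
      _ ≤ _ := by gcongr
  refine le_of_mul_le_mul_right ((le_of_eq ?_).trans hreflect) (by positivity)
  have hrpow : |b| ^ (a - 1 / 2) * |b| ^ (1 - a - 1 / 2) = 1 := by
    rw [← Real.rpow_add hb0, show a - 1 / 2 + (1 - a - 1 / 2) = 0 by ring, Real.rpow_zero]
  have hexp : Real.exp (-(π * |b|) / 2) * Real.exp (-(π * |b|) / 2) = Real.exp (-(π * |b|)) := by
    rw [← Real.exp_add]; ring_nf
  have hC' : π / C * C = π := div_mul_cancel₀ π hC.ne'
  linear_combination |b| ^ (a - 1 / 2) * |b| ^ (1 - a - 1 / 2) *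
      (Real.exp (-(π * |b|) / 2) * Real.exp (-(π * |b|) / 2)) * hC' +
    π * (Real.exp (-(π * |b|) / 2) * Real.exp (-(π * |b|) / 2)) * hrpow + π * hexp

theorem gamma_asymptotics_general (a : ℝ) :
    ∃ c C : ℝ, 0 < c ∧ 0 < C ∧ ∀ b : ℝ, 1 ≤ |b| →
      c * |b| ^ (a - 1/2) * Real.exp (-(π * |b|) / 2) ≤ ‖Complex.Gamma (a + b * Complex.I)‖ ∧
      ‖Complex.Gamma (a + b * Complex.I)‖ ≤ C * |b| ^ (a - 1/2) * Real.exp (-(π * |b|) / 2) := by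
  obtain ⟨c, hc, hlower⟩ := hasGammaLowerBound_of_one_sub (hasGammaUpperBound (1 - a))
  obtain ⟨C, hC, hupper⟩ := hasGammaUpperBound a
  exact ⟨c, C, hc, hC, fun b hb => ⟨hlower b hb, hupper b hb⟩⟩

theorem gamma_asymptotics (a : ℝ) (ha : 0 ≤ a) :
    ∃ c C : ℝ, 0 < c ∧ 0 < C ∧ ∀ b : ℝ, 1 ≤ |b| →
      c * |b| ^ (a - 1/2) * Real.exp (-(π * |b|) / 2) ≤ ‖Complex.Gamma (a + b * Complex.I)‖ ∧
      ‖Complex.Gamma (a + b * Complex.I)‖ ≤ C * |b| ^ (a - 1/2) * Real.exp (-(π * |b|) / 2) :=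
  gamma_asymptotics_general a
end

section
/- Let α > -1 and consider X = (0,∞) with measure dν(x) = x^α dx. Then there exists C > 0 such that for all x ∈ X, r > 0, and γ > 0: ν(B(x,γr)) ≤ C(1+γ)^d ν(B(x,r)), where d = max(1, α+1) and B(x,r) = {y ∈ (0,∞) : |x-y| < r}. -/
open Real MeasureTheory Set

/-! With `β = α + 1`, the measure of `B(x, r)` is `((x + r)^β - max (x - r) 0 ^ β) / β`.
Comparing `y ↦ y^β` with its tangent line at `x + r` (Bernoulli's inequality) and using the
monotonicity of `y ↦ y^(β - 1)` pins this increment between `min 1 β` and `2 * max 1 β` times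
`r * (x + r)^(β - 1)`. Doubling then reduces to
`γ * (x + γ r)^(β - 1) ≤ (1 + γ)^(max 1 β) * (x + r)^(β - 1)`, which follows from
`x + γ r ≤ (1 + γ) (x + r)` when `β ≥ 1` and from `γ / (1 + γ) * (x + r) ≤ x + γ r`
when `β ≤ 1`. -/

namespace Real

variable {a b β : ℝ}

lemma rpow_eq_mul_rpow_sub_one (ha : a ≠ 0) (β : ℝ) : a ^ β = a * a ^ (β - 1) := by
  rw [mul_comm, ← rpow_add_one ha, sub_add_cancel]

lemma rpow_tangent_le_rpow (ha : 0 < a) (hb : 0 ≤ b) (hβ : 1 ≤ β) :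
    a ^ β + β * a ^ (β - 1) * (b - a) ≤ b ^ β := by
  have bernoulli := one_add_mul_self_le_rpow_one_add (s := b / a - 1)
    (by linarith [div_nonneg hb ha.le]) hβ
  rw [add_sub_cancel, div_rpow hb ha.le, le_div_iff₀ (rpow_pos_of_pos ha β)] at bernoulli
  calc a ^ β + β * a ^ (β - 1) * (b - a) = (1 + β * (b / a - 1)) * a ^ β := by
        rw [rpow_sub_one ha.ne']; field_simp
    _ ≤ b ^ β := bernoulli

lemma rpow_le_rpow_tangent (ha : 0 < a) (hb : 0 ≤ b) (hβ₀ : 0 ≤ β) (hβ₁ : β ≤ 1) :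
    b ^ β ≤ a ^ β + β * a ^ (β - 1) * (b - a) := by
  have bernoulli := rpow_one_add_le_one_add_mul_self (s := b / a - 1)
    (by linarith [div_nonneg hb ha.le]) hβ₀ hβ₁
  rw [add_sub_cancel, div_rpow hb ha.le, div_le_iff₀ (rpow_pos_of_pos ha β)] at bernoulli
  calc b ^ β ≤ (1 + β * (b / a - 1)) * a ^ β := bernoulli
    _ = a ^ β + β * a ^ (β - 1) * (b - a) := by
        rw [rpow_sub_one ha.ne']; field_simp

lemma rpow_le_mul_rpow_sub_one (hb : 0 ≤ b) (hba : b ≤ a) (hβ : 1 ≤ β) :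
    b ^ β ≤ b * a ^ (β - 1) := by
  rcases hb.eq_or_lt with rfl | hb
  · simp [zero_rpow (by linarith : β ≠ 0)]
  calc b ^ β = b * b ^ (β - 1) := rpow_eq_mul_rpow_sub_one hb.ne' β
    _ ≤ b * a ^ (β - 1) := by gcongr

lemma mul_rpow_sub_one_le_rpow (hb : 0 ≤ b) (hba : b ≤ a) (hβ : β ≤ 1) :
    b * a ^ (β - 1) ≤ b ^ β := by
  rcases hb.eq_or_lt with rfl | hb
  · simpa using rpow_nonneg le_rfl β
  calc b * a ^ (β - 1) ≤ b * b ^ (β - 1) :=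
         mul_le_mul_of_nonneg_left (rpow_le_rpow_of_nonpos hb hba (by linarith)) hb.le
    _ = b ^ β := (rpow_eq_mul_rpow_sub_one hb.ne' β).symm

lemma min_one_mul_le_rpow_sub_rpow (hb : 0 ≤ b) (hba : b ≤ a) (hβ : 0 ≤ β) :
    min 1 β * ((a - b) * a ^ (β - 1)) ≤ a ^ β - b ^ β := by
  rcases hba.eq_or_lt with rfl | hba
  · simp
  have ha : 0 < a := hb.trans_lt hba
  have hsecant := rpow_eq_mul_rpow_sub_one ha.ne' β
  rcases le_total 1 β with h | h
  · rw [min_eq_left h]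
    linarith [rpow_le_mul_rpow_sub_one hb hba.le h]
  · rw [min_eq_right h]
    linarith [rpow_le_rpow_tangent ha hb hβ h]

lemma rpow_sub_rpow_le_max_one_mul (hb : 0 ≤ b) (hba : b ≤ a) :
    a ^ β - b ^ β ≤ max 1 β * ((a - b) * a ^ (β - 1)) := by
  rcases hba.eq_or_lt with rfl | hba
  · simp
  have ha : 0 < a := hb.trans_lt hba
  have hsecant := rpow_eq_mul_rpow_sub_one ha.ne' β
  rcases le_total 1 β with h | h
  · rw [max_eq_right h]
    linarith [rpow_tangent_le_rpow ha hb h]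
  · rw [max_eq_left h]
    linarith [mul_rpow_sub_one_le_rpow hb hba.le h]

end Real

lemma mul_rpow_sub_one_add_mul_le {β x r γ : ℝ} (hβ : 0 ≤ β) (hx : 0 ≤ x) (hr : 0 < r)
    (hγ : 0 < γ) :
    γ * (x + γ * r) ^ (β - 1) ≤ (1 + γ) ^ max 1 β * (x + r) ^ (β - 1) := by
  rcases le_total 1 β with h | h
  · have hcomp : x + γ * r ≤ (1 + γ) * (x + r) := by nlinarith
    rw [max_eq_right h, ← sub_add_cancel β 1, rpow_add_one (by positivity), add_sub_cancel_right,
      mul_comm _ (1 + γ), mul_assoc, ← mul_rpow (by positivity) (by positivity)]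
    gcongr
    linarith
  · set t := γ / (1 + γ) with ht_def
    have ht : 0 < t := by positivity
    have hcomp : t * (x + r) ≤ x + γ * r := by
      rw [div_mul_eq_mul_div, div_le_iff₀ (by positivity)]
      nlinarith [mul_nonneg (mul_nonneg hγ.le hγ.le) hr.le]
    have hγt : γ * t ^ (β - 1) = (1 + γ) * t ^ β := by
      rw [← sub_add_cancel β 1, rpow_add_one ht.ne', add_sub_cancel_right, ht_def]
      field_simp
    rw [max_eq_left h, rpow_one]
    calc γ * (x + γ * r) ^ (β - 1) ≤ γ * (t * (x + r)) ^ (β - 1) :=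
          mul_le_mul_of_nonneg_left
            (rpow_le_rpow_of_nonpos (mul_pos ht (by positivity)) hcomp (sub_nonpos.2 h)) hγ.le
      _ = (1 + γ) * t ^ β * (x + r) ^ (β - 1) := by
          rw [mul_rpow ht.le (by positivity), ← mul_assoc, hγt]
      _ ≤ (1 + γ) * (x + r) ^ (β - 1) := by
          gcongr
          exact mul_le_of_le_one_right (by positivity)
            (rpow_le_one ht.le ((div_le_one (by positivity)).2 (by linarith)) hβ)

noncomputable def besselMeasure (α : ℝ) : Measure ℝ :=
  (volume.restrict (Ioi 0)).withDensity fun y => ENNReal.ofReal (y ^ α)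

noncomputable def ballIncrement (β x r : ℝ) : ℝ :=
  (x + r) ^ β - max (x - r) 0 ^ β

lemma setOf_abs_sub_lt_eq_Ioo (x r : ℝ) : {y : ℝ | |x - y| < r} = Ioo (x - r) (x + r) := by
  ext y
  rw [mem_ofPred_eq, abs_sub_comm, ← Real.dist_eq, ← Metric.mem_ball, Real.ball_eq_Ioo]

lemma besselMeasure_ball {α x r : ℝ} (hα : -1 < α) (hx : 0 ≤ x) (hr : 0 < r) :
    besselMeasure α {y | |x - y| < r} =
      ENNReal.ofReal (ballIncrement (α + 1) x r / (α + 1)) := by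
  have hlt : max (x - r) 0 < x + r := max_lt (by linarith) (by positivity)
  rw [besselMeasure, setOf_abs_sub_lt_eq_Ioo, withDensity_apply _ measurableSet_Ioo,
    Measure.restrict_restrict measurableSet_Ioo, Ioo_inter_Ioi,
    setLIntegral_congr Ioo_ae_eq_Ioc, ← ofReal_integral_eq_lintegral_ofReal
      (intervalIntegral.intervalIntegrable_rpow' hα).1, ← intervalIntegral.integral_of_le hlt.le,
    integral_rpow (Or.inl hα), ballIncrement]
  filter_upwards [ae_restrict_mem measurableSet_Ioc] with y hy
  exact rpow_nonneg ((le_max_right _ _).trans hy.1.le) _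

lemma min_one_mul_le_ballIncrement {β x r : ℝ} (hβ : 0 ≤ β) (hx : 0 ≤ x) (hr : 0 ≤ r) :
    min 1 β * (r * (x + r) ^ (β - 1)) ≤ ballIncrement β x r := by
  have hwidth : r ≤ x + r - max (x - r) 0 := by linarith [max_le (by linarith : x - r ≤ x) hx]
  calc min 1 β * (r * (x + r) ^ (β - 1))
      ≤ min 1 β * ((x + r - max (x - r) 0) * (x + r) ^ (β - 1)) := by
        gcongr
    _ ≤ ballIncrement β x r :=
        min_one_mul_le_rpow_sub_rpow (le_max_right _ _) (max_le (by linarith) (by linarith)) hβ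

lemma ballIncrement_le_two_mul_max_one_mul {β x r : ℝ} (hx : 0 ≤ x) (hr : 0 ≤ r) :
    ballIncrement β x r ≤ 2 * max 1 β * (r * (x + r) ^ (β - 1)) := by
  have hwidth : x + r - max (x - r) 0 ≤ 2 * r := by linarith [le_max_left (x - r) 0]
  calc ballIncrement β x r ≤ max 1 β * ((x + r - max (x - r) 0) * (x + r) ^ (β - 1)) :=
        rpow_sub_rpow_le_max_one_mul (le_max_right _ _) (max_le (by linarith) (by linarith))
    _ ≤ max 1 β * (2 * r * (x + r) ^ (β - 1)) := by
        gcongr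
    _ = 2 * max 1 β * (r * (x + r) ^ (β - 1)) := by ring

lemma ballIncrement_dilate_le {β x r γ : ℝ} (hβ : 0 < β) (hx : 0 ≤ x) (hr : 0 < r)
    (hγ : 0 < γ) :
    ballIncrement β x (γ * r) ≤
      2 * max 1 β / min 1 β * (1 + γ) ^ max 1 β * ballIncrement β x r := by
  have hmin : 0 < min 1 β := lt_min one_pos hβ
  calc ballIncrement β x (γ * r) ≤ 2 * max 1 β * (γ * r * (x + γ * r) ^ (β - 1)) :=
        ballIncrement_le_two_mul_max_one_mul hx (by positivity)
    _ = 2 * max 1 β * r * (γ * (x + γ * r) ^ (β - 1)) := by ring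
    _ ≤ 2 * max 1 β * r * ((1 + γ) ^ max 1 β * (x + r) ^ (β - 1)) :=
        mul_le_mul_of_nonneg_left (mul_rpow_sub_one_add_mul_le hβ.le hx hr hγ) (by positivity)
    _ = 2 * max 1 β / min 1 β * (1 + γ) ^ max 1 β * (min 1 β * (r * (x + r) ^ (β - 1))) := by
        field_simp
    _ ≤ 2 * max 1 β / min 1 β * (1 + γ) ^ max 1 β * ballIncrement β x r := by
        gcongr
        exact min_one_mul_le_ballIncrement hβ.le hx hr.le

theorem bessel_measure_doubling (α : ℝ) (hα : -1 < α) :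
    ∃ C : ℝ, 0 < C ∧
      ∀ x r γ : ℝ, 0 < x → 0 < r → 0 < γ →
        ((MeasureTheory.volume.restrict (Set.Ioi (0:ℝ))).withDensity
            (fun y => ENNReal.ofReal (y ^ α))) {y | |x - y| < γ * r}
          ≤ ENNReal.ofReal (C * (1 + γ) ^ (max 1 (α + 1))) *
            ((MeasureTheory.volume.restrict (Set.Ioi (0:ℝ))).withDensity
              (fun y => ENNReal.ofReal (y ^ α))) {y | |x - y| < r} := by
  have hβ : 0 < α + 1 := by linarith
  have hmin : 0 < min 1 (α + 1) := lt_min one_pos hβ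
  refine ⟨2 * max 1 (α + 1) / min 1 (α + 1), by positivity, fun x r γ hx hr hγ => ?_⟩
  change besselMeasure α _ ≤ _ * besselMeasure α _
  rw [besselMeasure_ball hα hx.le (mul_pos hγ hr), besselMeasure_ball hα hx.le hr,
    ← ENNReal.ofReal_mul (by positivity), ← mul_div_assoc]
  gcongr
  exact ballIncrement_dilate_le hβ hx.le hr hγ
end

section
/- Let α > -1 and ν be the measure x^α dx on (0,∞). Then there exist constants c, C > 0 such that for all y > 0 and R > 0: c ≤ ν(B(y, R^{-1/2})) · R^{(α+1)/2} · (1 + √R·y)^{-α} ≤ C, where B(y,r) = (max(y-r,0), y+r). -/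
open Real MeasureTheory

/-!
With `a = max (y - r) 0` and `b = y + r`, the ball `B(y, r)` has measure
`(b ^ (α + 1) - a ^ (α + 1)) / (α + 1)`. Bernoulli's inequality (convexity of `t ↦ t ^ (α + 1)`
for `α ≥ 0`, concavity for `α ≤ 0`) gives `b ^ (α + 1) - a ^ (α + 1) ≍ b ^ α * (b - a)`, and
`r ≤ b - a ≤ 2 * r`, so the measure is `≍ r * (y + r) ^ α`. For `r = R ^ (-1/2)` this is exactly
the reciprocal of `R ^ ((α + 1) / 2) * (1 + √R * y) ^ (-α)`.
-/

section

variable {α a b : ℝ}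

theorem one_sub_rpow_add_one_bounds (hα : -1 < α) {u : ℝ} (hu0 : 0 ≤ u) (hu1 : u ≤ 1) :
    min 1 (α + 1) * (1 - u) ≤ 1 - u ^ (α + 1) ∧ 1 - u ^ (α + 1) ≤ max 1 (α + 1) * (1 - u) := by
  have hs : -1 ≤ u - 1 := by linarith
  rcases le_total (α + 1) 1 with h | h
  · have bernoulli := rpow_one_add_le_one_add_mul_self hs (by linarith) h
    rw [add_sub_cancel] at bernoulli
    rw [min_eq_right h, max_eq_left h]
    constructor
    · linarith
    · linarith [self_le_rpow_of_le_one hu0 hu1 h]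
  · have bernoulli := one_add_mul_self_le_rpow_one_add hs h
    rw [add_sub_cancel] at bernoulli
    rw [min_eq_left h, max_eq_right h]
    constructor
    · linarith [rpow_le_self_of_le_one hu0 hu1 h]
    · linarith

theorem rpow_add_one_sub_rpow_add_one_bounds (hα : -1 < α) (ha : 0 ≤ a) (hab : a ≤ b) :
    min 1 (α + 1) * (b ^ α * (b - a)) ≤ b ^ (α + 1) - a ^ (α + 1) ∧
      b ^ (α + 1) - a ^ (α + 1) ≤ max 1 (α + 1) * (b ^ α * (b - a)) := by
  rcases (ha.trans hab).eq_or_lt with hb | hb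
  · obtain rfl : a = 0 := le_antisymm (hb ▸ hab) ha
    subst hb
    simp [zero_rpow (show α + 1 ≠ 0 by linarith)]
  obtain ⟨hlow, hup⟩ := one_sub_rpow_add_one_bounds hα (div_nonneg ha hb.le)
    (div_le_one_of_le₀ hab hb.le)
  have hbβ : 0 < b ^ (α + 1) := rpow_pos_of_pos hb _
  have hdiff : b ^ (α + 1) - a ^ (α + 1) = b ^ (α + 1) * (1 - (a / b) ^ (α + 1)) := by
    rw [div_rpow ha hb.le, mul_sub, mul_div_cancel₀ _ hbβ.ne', mul_one]
  have hlen : b ^ α * (b - a) = b ^ (α + 1) * (1 - a / b) := by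
    rw [rpow_add_one hb.ne']
    field_simp
  rw [hdiff, hlen, mul_left_comm _ (b ^ (α + 1)), mul_left_comm _ (b ^ (α + 1))]
  exact ⟨mul_le_mul_of_nonneg_left hlow hbβ.le, mul_le_mul_of_nonneg_left hup hbβ.le⟩

theorem withDensity_rpow_Ioo_toReal (hα : -1 < α) (hab : a ≤ b) (hb : 0 ≤ b) :
    (((volume.restrict (Set.Ioi (0:ℝ))).withDensity fun x => ENNReal.ofReal (x ^ α))
        (Set.Ioo a b)).toReal = (b ^ (α + 1) - (max a 0) ^ (α + 1)) / (α + 1) := by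
  have hnonneg : 0 ≤ᵐ[volume.restrict (Set.Ioo (max a 0) b)] fun x : ℝ => x ^ α :=
    (ae_restrict_iff' measurableSet_Ioo).2 <| .of_forall fun x hx =>
      rpow_nonneg ((le_max_right a 0).trans hx.1.le) α
  rw [withDensity_apply _ measurableSet_Ioo, Measure.restrict_restrict measurableSet_Ioo,
    Set.Ioo_inter_Ioi, ← integral_eq_lintegral_of_nonneg_ae hnonneg
      (measurable_id.pow_const α).aestronglyMeasurable, ← integral_Ioc_eq_integral_Ioo,
    ← intervalIntegral.integral_of_le (max_le hab hb), integral_rpow (.inl hα)]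

theorem rpow_mul_one_add_sqrt_mul_rpow_neg {R y : ℝ} (hR : 0 < R) (hy : 0 ≤ y) :
    R ^ ((α + 1) / 2) * (1 + √R * y) ^ (-α) =
      (R ^ (-(1:ℝ)/2) * (y + R ^ (-(1:ℝ)/2)) ^ α)⁻¹ := by
  set r := R ^ (-(1:ℝ)/2) with hr_def
  have hr : 0 < r := rpow_pos_of_pos hR _
  have hsqrt : √R = r⁻¹ := by
    rw [sqrt_eq_rpow, hr_def, ← rpow_neg hR.le]
    norm_num
  have hRpow : R ^ ((α + 1) / 2) = (r ^ α * r)⁻¹ := by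
    rw [hr_def, ← rpow_mul hR.le, ← rpow_add hR, ← rpow_neg hR.le]
    ring_nf
  have hone : 1 + √R * y = (y + r) / r := by
    rw [hsqrt]; field_simp; ring
  rw [hRpow, hone, rpow_neg (by positivity), div_rpow (by positivity) hr.le]
  field_simp

end

theorem bessel_measure_ball_asymptotics (α : ℝ) (hα : -1 < α) :
    ∃ c C : ℝ, 0 < c ∧ 0 < C ∧
      ∀ y R : ℝ, 0 < y → 0 < R →
        c ≤ (((MeasureTheory.volume.restrict (Set.Ioi (0:ℝ))).withDensity
              (fun x => ENNReal.ofReal (x ^ α)))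
                (Set.Ioo (y - R ^ (-(1:ℝ)/2)) (y + R ^ (-(1:ℝ)/2)))).toReal *
            R ^ ((α + 1) / 2) * (1 + Real.sqrt R * y) ^ (-α) ∧
        (((MeasureTheory.volume.restrict (Set.Ioi (0:ℝ))).withDensity
              (fun x => ENNReal.ofReal (x ^ α)))
                (Set.Ioo (y - R ^ (-(1:ℝ)/2)) (y + R ^ (-(1:ℝ)/2)))).toReal *
            R ^ ((α + 1) / 2) * (1 + Real.sqrt R * y) ^ (-α) ≤ C := by
  have hβ : 0 < α + 1 := by linarith
  refine ⟨min 1 (α + 1) / (α + 1), 2 * max 1 (α + 1) / (α + 1),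
    div_pos (lt_min one_pos hβ) hβ, div_pos (by positivity) hβ, fun y R hy hR => ?_⟩
  set r := R ^ (-(1:ℝ)/2)
  have hr : 0 < r := rpow_pos_of_pos hR _
  have hlen_lower : r ≤ y + r - max (y - r) 0 := by
    linarith [(max_le (by linarith) hy.le : max (y - r) 0 ≤ y)]
  have hlen_upper : y + r - max (y - r) 0 ≤ 2 * r := by linarith [le_max_left (y - r) 0]
  obtain ⟨hlower, hupper⟩ := rpow_add_one_sub_rpow_add_one_bounds hα (b := y + r)
    (le_max_right (y - r) 0) (max_le (by linarith) (by linarith))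
  rw [withDensity_rpow_Ioo_toReal hα (by linarith) (by linarith), mul_assoc,
    rpow_mul_one_add_sqrt_mul_rpow_neg hR hy.le, ← div_eq_mul_inv, div_div,
    le_div_iff₀ (by positivity), div_le_iff₀ (by positivity)]
  constructor
  · calc min 1 (α + 1) / (α + 1) * ((α + 1) * (r * (y + r) ^ α))
        = min 1 (α + 1) * ((y + r) ^ α * r) := by field_simp
      _ ≤ min 1 (α + 1) * ((y + r) ^ α * (y + r - max (y - r) 0)) := by gcongr
      _ ≤ _ := hlower
  · calc (y + r) ^ (α + 1) - max (y - r) 0 ^ (α + 1)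
        ≤ max 1 (α + 1) * ((y + r) ^ α * (y + r - max (y - r) 0)) := hupper
      _ ≤ max 1 (α + 1) * ((y + r) ^ α * (2 * r)) := by gcongr
      _ = 2 * max 1 (α + 1) / (α + 1) * ((α + 1) * (r * (y + r) ^ α)) := by field_simp
end
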